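/- Let D be a delta-matroid on [n]. If n = 0 then U_D(u,v) = 1. For any i ∈ [n]: if i is neither a loop nor a coloop of D, then U_D(u,v) = U_{D/i}(u,v) + U_{D∖i}(u,v) + u·U_{D({i})}(u,v); if i is a loop or a coloop of D, then U_D(u,v) = (u + v + 1)·U_{D({i})}(u,v). -/

import Mathlib

open Finset
open scoped symmDiff

/-- The rank-type function of a nonempty family `G` of subsets of `Fin n`, evaluated on an
admissible set `(Sp, Sn)`: `max_{F ∈ G} (|Sp ∩ F| + |Sn \ F| − |Sn ∩ F| − |Sp \ F|)`.
(Junk value `0` when the family is empty.) -/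
noncomputable def gFam {n : ℕ} (G : Finset (Finset (Fin n))) (Sp Sn : Finset (Fin n)) : ℤ :=
  if h : G.Nonempty then
    G.sup' h fun F => ((Sp ∩ F).card : ℤ) + ((Sn \ F).card : ℤ)
      - ((Sn ∩ F).card : ℤ) - ((Sp \ F).card : ℤ)
  else 0

/-- A delta-matroid on `[n]`: a nonempty family of subsets of `Fin n` (each `F` encoding the
size-`n` admissible set `(F, [n] \ F)`), satisfying the symmetric exchange axiom. -/
structure DeltaMatroid (n : ℕ) where
  feas : Finset (Finset (Fin n))
  nonempty : feas.Nonempty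
  exchange : ∀ F₁ ∈ feas, ∀ F₂ ∈ feas, ∀ x ∈ F₁ ∆ F₂, ∃ y ∈ F₁ ∆ F₂, F₁ ∆ {x, y} ∈ feas

/-- The rank function `g_D` of a delta-matroid, on admissible sets `(Sp, Sn)`. -/
noncomputable def DeltaMatroid.g {n : ℕ} (D : DeltaMatroid n) :
    Finset (Fin n) → Finset (Fin n) → ℤ :=
  gFam D.feas

/-- The U-polynomial of a family `G` on ground set `E`, in `ℤ[u,v]` with `u = X 0`, `v = X 1`:
`Σ_S u^{|E|−|S|} v^{(|S|−g(S))/2}`, the sum over admissible sets `S = (Sp, Sn)` on `E`. -/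
noncomputable def Upoly {n : ℕ} (E : Finset (Fin n)) (G : Finset (Finset (Fin n))) :
    MvPolynomial (Fin 2) ℤ :=
  ∑ Sp ∈ E.powerset, ∑ Sn ∈ (E \ Sp).powerset,
    (MvPolynomial.X 0) ^ (E.card - Sp.card - Sn.card) *
      (MvPolynomial.X 1) ^ ((((Sp.card + Sn.card : ℤ)) - gFam G Sp Sn).toNat / 2)

/-! The recursion holds summand by summand. Every admissible set on `[n]` is `S`, `S + i` or
`S + ī` for a unique admissible `S` on `[n] \ {i}`. On `S` the rank of `D` equals that of the
projection `D({i})`, and the summand gains the factor `u`. If `i` is not a loop, adding `i` raises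
the rank by one over that of `D/i`: a feasible set avoiding `i` is traded by symmetric exchange for
one containing `i`, losing at most `2` in agreement with `S`. Dually for `ī`, `D∖i` and coloops.
If `i` is a loop or a coloop, all feasible sets have the same sign at `i`, so `S + i` and `S + ī`
change the rank of `D({i})` by `±1`, contributing the factors `1` and `v`. -/

open MvPolynomial (X)

section Agreement

variable {α : Type*} [DecidableEq α]

def sgn (F : Finset α) (j : α) : ℤ := if j ∈ F then 1 else -1

lemma sgn_le_one (F : Finset α) (j : α) : sgn F j ≤ 1 := by
  unfold sgn; split_ifs <;> norm_num

lemma neg_one_le_sgn (F : Finset α) (j : α) : -1 ≤ sgn F j := by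
  unfold sgn; split_ifs <;> norm_num

/-- `|S ∩ A_F| - |S \ A_F|` for the admissible set `A_F = (F, [n] \ F)` encoded by `F`. -/
def agreement (Sp Sn F : Finset α) : ℤ :=
  ((Sp ∩ F).card : ℤ) + ((Sn \ F).card : ℤ) - ((Sn ∩ F).card : ℤ) - ((Sp \ F).card : ℤ)

lemma sum_sgn (S F : Finset α) :
    ∑ j ∈ S, sgn F j = ((S ∩ F).card : ℤ) - ((S \ F).card : ℤ) := by
  simp only [sgn]
  rw [sum_ite, sum_const, sum_const, filter_mem_eq_inter, ← sdiff_eq_filter]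
  simp only [nsmul_eq_mul, mul_one, mul_neg]
  ring

lemma agreement_eq_sum (Sp Sn F : Finset α) :
    agreement Sp Sn F = ∑ j ∈ Sp, sgn F j - ∑ j ∈ Sn, sgn F j := by
  rw [sum_sgn, sum_sgn, agreement]
  ring

variable {Sp Sn F F' : Finset α} {i : α}

lemma agreement_congr (h : ∀ j ∈ Sp ∪ Sn, j ∈ F ↔ j ∈ F') :
    agreement Sp Sn F = agreement Sp Sn F' := by
  have hsgn : ∀ j ∈ Sp ∪ Sn, sgn F j = sgn F' j := fun j hj => by simp only [sgn, h j hj]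
  rw [agreement_eq_sum, agreement_eq_sum,
    sum_congr rfl fun j hj => hsgn j (mem_union_left _ hj),
    sum_congr rfl fun j hj => hsgn j (mem_union_right _ hj)]

lemma agreement_erase (hip : i ∉ Sp) (hin : i ∉ Sn) (F : Finset α) :
    agreement Sp Sn (F.erase i) = agreement Sp Sn F :=
  agreement_congr fun j hj => by
    have : j ≠ i := by rintro rfl; simp_all
    simp [this]

lemma agreement_insert_left (hip : i ∉ Sp) (F : Finset α) :
    agreement (insert i Sp) Sn F = agreement Sp Sn F + sgn F i := by
  rw [agreement_eq_sum, agreement_eq_sum, sum_insert hip]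
  ring

lemma agreement_insert_right (hin : i ∉ Sn) (F : Finset α) :
    agreement Sp (insert i Sn) F = agreement Sp Sn F - sgn F i := by
  rw [agreement_eq_sum, agreement_eq_sum, sum_insert hin]
  ring

lemma agreement_le_card (Sp Sn F : Finset α) : agreement Sp Sn F ≤ Sp.card + Sn.card := by
  have h₁ : (Sp ∩ F).card ≤ Sp.card := card_le_card inter_subset_left
  have h₂ : (Sn \ F).card ≤ Sn.card := card_le_card sdiff_subset
  unfold agreement
  omega

lemma agreement_symmDiff_singleton_ge (hd : Disjoint Sp Sn) (F : Finset α) (y : α) :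
    agreement Sp Sn F - 2 ≤ agreement Sp Sn (F ∆ {y}) := by
  have hoff : ∀ {Tp Tn : Finset α}, y ∉ Tp → y ∉ Tn →
      agreement Tp Tn (F ∆ {y}) = agreement Tp Tn F := fun hp hn =>
    agreement_congr fun j hj => by
      have : j ≠ y := by rintro rfl; simp_all
      simp [mem_symmDiff, this]
  have := sgn_le_one F y
  have := neg_one_le_sgn F y
  have := sgn_le_one (F ∆ {y}) y
  have := neg_one_le_sgn (F ∆ {y}) y
  by_cases hp : y ∈ Sp
  · have hn : y ∉ Sn := disjoint_left.1 hd hp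
    rw [← insert_erase hp, agreement_insert_left (notMem_erase y Sp),
      agreement_insert_left (notMem_erase y Sp), hoff (notMem_erase y Sp) hn]
    linarith
  by_cases hn : y ∈ Sn
  · rw [← insert_erase hn, agreement_insert_right (notMem_erase y Sn),
      agreement_insert_right (notMem_erase y Sn), hoff hp (notMem_erase y Sn)]
    linarith
  · rw [hoff hp hn]
    linarith

def SymmetricExchange (G : Finset (Finset α)) : Prop :=
  ∀ F₁ ∈ G, ∀ F₂ ∈ G, ∀ x ∈ F₁ ∆ F₂, ∃ y ∈ F₁ ∆ F₂, F₁ ∆ {x, y} ∈ G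

/-- The witness is `F₁ ∆ {i, y}` from the exchange axiom: off `i` it differs from `F₁` in at
most `y`, which costs at most `2`. -/
lemma SymmetricExchange.exists_flip {G : Finset (Finset α)} (hG : SymmetricExchange G)
    {F₁ F₂ : Finset α} (hF₁ : F₁ ∈ G) (hF₂ : F₂ ∈ G) (hi : i ∈ F₁ ∆ F₂)
    (hip : i ∉ Sp) (hin : i ∉ Sn) (hd : Disjoint Sp Sn) :
    ∃ F ∈ G, (i ∈ F ↔ i ∉ F₁) ∧ agreement Sp Sn F₁ - 2 ≤ agreement Sp Sn F := by
  obtain ⟨y, -, hy⟩ := hG F₁ hF₁ F₂ hF₂ i hi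
  refine ⟨F₁ ∆ {i, y}, hy, by by_cases hyi : y = i <;> simp [mem_symmDiff, hyi], ?_⟩
  calc agreement Sp Sn F₁ - 2 ≤ agreement Sp Sn (F₁ ∆ {y}) :=
        agreement_symmDiff_singleton_ge hd F₁ y
    _ = agreement Sp Sn (F₁ ∆ {i, y}) := agreement_congr fun j hj => by
        have : j ≠ i := by rintro rfl; simp_all
        simp [mem_symmDiff, this]

end Agreement

section Rank

variable {n : ℕ} {G : Finset (Finset (Fin n))} {Sp Sn : Finset (Fin n)} {i : Fin n}

lemma gFam_eq_sup' (hG : G.Nonempty) (Sp Sn : Finset (Fin n)) :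
    gFam G Sp Sn = G.sup' hG (agreement Sp Sn) :=
  dif_pos hG

lemma gFam_le_card (G : Finset (Finset (Fin n))) (Sp Sn : Finset (Fin n)) :
    gFam G Sp Sn ≤ Sp.card + Sn.card := by
  rcases G.eq_empty_or_nonempty with rfl | hG
  · simp only [gFam, Finset.not_nonempty_empty, dite_false]
    positivity
  · rw [gFam_eq_sup' hG]
    exact sup'_le _ _ fun F _ => agreement_le_card Sp Sn F

lemma gFam_empty_empty (G : Finset (Finset (Fin n))) : gFam G ∅ ∅ = 0 := by
  rcases G.eq_empty_or_nonempty with rfl | hG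
  · simp [gFam]
  · have h0 : agreement (∅ : Finset (Fin n)) ∅ = fun _ => 0 := funext fun F => by simp [agreement]
    rw [gFam_eq_sup' hG, h0, sup'_const]

lemma gFam_image_erase (hip : i ∉ Sp) (hin : i ∉ Sn) :
    gFam (G.image (·.erase i)) Sp Sn = gFam G Sp Sn := by
  rcases G.eq_empty_or_nonempty with rfl | hG
  · simp
  · rw [gFam_eq_sup' (hG.image _), gFam_eq_sup' hG, sup'_image]
    exact sup'_congr hG rfl fun F _ => agreement_erase hip hin F

lemma gFam_eq_add_of_forall (hG : G.Nonempty) {Tp Tn : Finset (Fin n)} {c : ℤ}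
    (h : ∀ F ∈ G, agreement Tp Tn F = agreement Sp Sn F + c) :
    gFam G Tp Tn = gFam G Sp Sn + c := by
  rw [gFam_eq_sup' hG, gFam_eq_sup' hG, sup'_add]
  exact sup'_congr hG rfl h

lemma gFam_eq_gFam_filter_add_one {P : Finset (Fin n) → Prop} [DecidablePred P]
    {Tp Tn : Finset (Fin n)} (hP : ∃ F ∈ G, P F)
    (hon : ∀ F ∈ G, P F → agreement Tp Tn F = agreement Sp Sn F + 1)
    (hoff : ∀ F ∈ G, ¬ P F → ∃ F' ∈ G, P F' ∧ agreement Tp Tn F ≤ agreement Sp Sn F' + 1) :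
    gFam G Tp Tn = gFam (G.filter P) Sp Sn + 1 := by
  obtain ⟨F₀, hF₀, hPF₀⟩ := hP
  have hG : G.Nonempty := ⟨F₀, hF₀⟩
  have hGP : (G.filter P).Nonempty := ⟨F₀, mem_filter.2 ⟨hF₀, hPF₀⟩⟩
  have le_filter : ∀ F ∈ G, P F →
      agreement Sp Sn F + 1 ≤ (G.filter P).sup' hGP (agreement Sp Sn) + 1 :=
    fun F hF hPF => add_le_add_left (le_sup' (agreement Sp Sn) (mem_filter.2 ⟨hF, hPF⟩)) 1
  rw [gFam_eq_sup' hG, gFam_eq_sup' hGP]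
  refine le_antisymm (sup'_le _ _ fun F hF => ?_) ?_
  · by_cases hPF : P F
    · exact (hon F hF hPF).trans_le (le_filter F hF hPF)
    · obtain ⟨F', hF', hPF', hle⟩ := hoff F hF hPF
      exact hle.trans (le_filter F' hF' hPF')
  · rw [sup'_add]
    refine sup'_le _ _ fun F hF => ?_
    obtain ⟨hFG, hPF⟩ := mem_filter.1 hF
    exact (hon F hFG hPF).ge.trans (le_sup' _ hFG)

lemma gFam_insert_left_of_exists_mem (hG : SymmetricExchange G) (hnl : ∃ F ∈ G, i ∈ F)
    (hip : i ∉ Sp) (hin : i ∉ Sn) (hd : Disjoint Sp Sn) :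
    gFam G (insert i Sp) Sn = gFam ((G.filter (i ∈ ·)).image (·.erase i)) Sp Sn + 1 := by
  rw [gFam_image_erase hip hin]
  obtain ⟨F₂, hF₂, hiF₂⟩ := hnl
  refine gFam_eq_gFam_filter_add_one ⟨F₂, hF₂, hiF₂⟩ (fun F _ hiF => ?_) fun F hF hiF => ?_
  · rw [agreement_insert_left hip, sgn, if_pos hiF]
  · obtain ⟨F', hF', hiF', hle⟩ :=
      hG.exists_flip hF hF₂ (mem_symmDiff.2 (Or.inr ⟨hiF₂, hiF⟩)) hip hin hd
    refine ⟨F', hF', hiF'.2 hiF, ?_⟩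
    rw [agreement_insert_left hip, sgn, if_neg hiF]
    linarith

lemma gFam_insert_right_of_exists_not_mem (hG : SymmetricExchange G) (hnc : ∃ F ∈ G, i ∉ F)
    (hip : i ∉ Sp) (hin : i ∉ Sn) (hd : Disjoint Sp Sn) :
    gFam G Sp (insert i Sn) = gFam (G.filter (i ∉ ·)) Sp Sn + 1 := by
  obtain ⟨F₂, hF₂, hiF₂⟩ := hnc
  refine gFam_eq_gFam_filter_add_one ⟨F₂, hF₂, hiF₂⟩ (fun F _ hiF => ?_) fun F hF hiF => ?_
  · rw [agreement_insert_right hin, sgn, if_neg hiF]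
    ring
  · rw [not_not] at hiF
    obtain ⟨F', hF', hiF', hle⟩ :=
      hG.exists_flip hF hF₂ (mem_symmDiff.2 (Or.inl ⟨hiF, hiF₂⟩)) hip hin hd
    refine ⟨F', hF', fun h => hiF'.1 h hiF, ?_⟩
    rw [agreement_insert_right hin, sgn, if_pos hiF]
    linarith

lemma gFam_insert_left_of_forall_sgn (hG : G.Nonempty) {c : ℤ} (h : ∀ F ∈ G, sgn F i = c)
    (hip : i ∉ Sp) : gFam G (insert i Sp) Sn = gFam G Sp Sn + c :=
  gFam_eq_add_of_forall hG fun F hF => by rw [agreement_insert_left hip, h F hF]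

lemma gFam_insert_right_of_forall_sgn (hG : G.Nonempty) {c : ℤ} (h : ∀ F ∈ G, sgn F i = c)
    (hin : i ∉ Sn) : gFam G Sp (insert i Sn) = gFam G Sp Sn + -c :=
  gFam_eq_add_of_forall hG fun F hF => by rw [agreement_insert_right hin, h F hF, sub_eq_add_neg]

end Rank

section AdmissibleSums

variable {α M : Type*} [DecidableEq α] [AddCommMonoid M] {E : Finset α}

lemma sum_admissible_congr {f g : Finset α → Finset α → M}
    (h : ∀ Sp Sn, Sp ⊆ E → Sn ⊆ E → Disjoint Sp Sn → f Sp Sn = g Sp Sn) :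
    ∑ Sp ∈ E.powerset, ∑ Sn ∈ (E \ Sp).powerset, f Sp Sn
      = ∑ Sp ∈ E.powerset, ∑ Sn ∈ (E \ Sp).powerset, g Sp Sn :=
  sum_congr rfl fun Sp hSp => sum_congr rfl fun Sn hSn => by
    rw [mem_powerset] at hSp hSn
    exact h Sp Sn hSp (hSn.trans sdiff_subset) (disjoint_of_subset_right hSn disjoint_sdiff)

lemma sum_admissible_insert {i : α} (hi : i ∉ E) (t : Finset α → Finset α → M) :
    ∑ Sp ∈ (insert i E).powerset, ∑ Sn ∈ (insert i E \ Sp).powerset, t Sp Sn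
      = ∑ Sp ∈ E.powerset, ∑ Sn ∈ (E \ Sp).powerset,
          (t Sp Sn + t (insert i Sp) Sn + t Sp (insert i Sn)) := by
  rw [sum_powerset_insert hi, ← sum_add_distrib]
  refine sum_congr rfl fun Sp hSp => ?_
  have hip : i ∉ Sp := notMem_mono (mem_powerset.1 hSp) hi
  rw [insert_sdiff_of_notMem _ hip, insert_sdiff_insert, sdiff_insert_of_notMem hi,
    sum_powerset_insert (notMem_sdiff_of_notMem_left hi), ← sum_add_distrib, ← sum_add_distrib]
  exact sum_congr rfl fun Sn _ => add_right_comm _ _ _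

lemma card_add_card_le_of_disjoint {Sp Sn : Finset α} (hSp : Sp ⊆ E) (hSn : Sn ⊆ E)
    (hd : Disjoint Sp Sn) : Sp.card + Sn.card ≤ E.card :=
  (card_union_of_disjoint hd).symm.trans_le (card_le_card (union_subset hSp hSn))

end AdmissibleSums

section Monomials

noncomputable def Uterm (e s : ℕ) (g : ℤ) : MvPolynomial (Fin 2) ℤ :=
  X 0 ^ (e - s) * X 1 ^ ((s - g).toNat / 2)

variable {e s : ℕ} {g : ℤ}

lemma Uterm_succ_left (h : s ≤ e) : Uterm (e + 1) s g = X 0 * Uterm e s g := by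
  rw [Uterm, Uterm, Nat.sub_add_comm h, pow_succ]
  ring

lemma Uterm_succ_succ_add_one : Uterm (e + 1) (s + 1) (g + 1) = Uterm e s g := by
  have hexp : ((s + 1 : ℕ) : ℤ) - (g + 1) = s - g := by
    push_cast
    ring
  rw [Uterm, Uterm, Nat.add_sub_add_right, hexp]

lemma Uterm_succ_succ_add_neg_one (h : g ≤ s) :
    Uterm (e + 1) (s + 1) (g + -1) = X 1 * Uterm e s g := by
  have hexp : ((s + 1 : ℕ) - (g + -1)).toNat / 2 = (s - g).toNat / 2 + 1 := by
    push_cast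
    omega
  rw [Uterm, Uterm, Nat.add_sub_add_right, hexp, pow_succ]
  ring

end Monomials

section Upoly

variable {n : ℕ} {E : Finset (Fin n)} {G : Finset (Finset (Fin n))} {i : Fin n}

lemma Upoly_eq_sum_Uterm (E : Finset (Fin n)) (G : Finset (Finset (Fin n))) :
    Upoly E G = ∑ Sp ∈ E.powerset, ∑ Sn ∈ (E \ Sp).powerset,
      Uterm E.card (Sp.card + Sn.card) (gFam G Sp Sn) := by
  simp only [Upoly, Uterm, Nat.sub_sub, Nat.cast_add]

lemma Upoly_empty (G : Finset (Finset (Fin n))) : Upoly ∅ G = 1 := by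
  simp [Upoly, gFam_empty_empty]

lemma Upoly_eq_sum_erase (hi : i ∈ E) :
    Upoly E G = ∑ Sp ∈ (E.erase i).powerset, ∑ Sn ∈ (E.erase i \ Sp).powerset,
      (Uterm ((E.erase i).card + 1) (Sp.card + Sn.card) (gFam G Sp Sn)
        + Uterm ((E.erase i).card + 1) (Sp.card + Sn.card + 1) (gFam G (insert i Sp) Sn)
        + Uterm ((E.erase i).card + 1) (Sp.card + Sn.card + 1) (gFam G Sp (insert i Sn))) := by
  have hi' := notMem_erase i E
  conv_lhs => rw [Upoly_eq_sum_Uterm, ← insert_erase hi, card_insert_of_notMem hi',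
    sum_admissible_insert hi']
  refine sum_admissible_congr fun Sp Sn hSp hSn _ => ?_
  rw [card_insert_of_notMem (notMem_mono hSp hi'), card_insert_of_notMem (notMem_mono hSn hi'),
    Nat.add_right_comm, Nat.add_assoc]

theorem Upoly_eq_of_exists_mem_of_exists_not_mem (hi : i ∈ E) (hG : SymmetricExchange G)
    (hnl : ∃ F ∈ G, i ∈ F) (hnc : ∃ F ∈ G, i ∉ F) :
    Upoly E G = Upoly (E.erase i) ((G.filter (i ∈ ·)).image (·.erase i))
      + Upoly (E.erase i) (G.filter (i ∉ ·)) + X 0 * Upoly (E.erase i) (G.image (·.erase i)) := by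
  simp only [Upoly_eq_sum_erase hi, Upoly_eq_sum_Uterm, mul_sum, ← sum_add_distrib]
  refine sum_admissible_congr fun Sp Sn hSp hSn hd => ?_
  have hip := notMem_mono hSp (notMem_erase i E)
  have hin := notMem_mono hSn (notMem_erase i E)
  rw [gFam_insert_left_of_exists_mem hG hnl hip hin hd,
    gFam_insert_right_of_exists_not_mem hG hnc hip hin hd, gFam_image_erase (G := G) hip hin,
    Uterm_succ_left (card_add_card_le_of_disjoint hSp hSn hd), Uterm_succ_succ_add_one,
    Uterm_succ_succ_add_one]
  ring

theorem Upoly_eq_of_loop_or_coloop (hi : i ∈ E) (hG : G.Nonempty)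
    (h : (∀ F ∈ G, i ∉ F) ∨ ∀ F ∈ G, i ∈ F) :
    Upoly E G = (X 0 + X 1 + 1) * Upoly (E.erase i) (G.image (·.erase i)) := by
  obtain ⟨c, hc, hsgn⟩ : ∃ c : ℤ, (c = -1 ∨ c = 1) ∧ ∀ F ∈ G, sgn F i = c := by
    rcases h with h | h
    exacts [⟨-1, .inl rfl, fun F hF => if_neg (h F hF)⟩, ⟨1, .inr rfl, fun F hF => if_pos (h F hF)⟩]
  simp only [Upoly_eq_sum_erase hi, Upoly_eq_sum_Uterm, mul_sum]
  refine sum_admissible_congr fun Sp Sn hSp hSn hd => ?_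
  have hip := notMem_mono hSp (notMem_erase i E)
  have hin := notMem_mono hSn (notMem_erase i E)
  have hle := gFam_le_card G Sp Sn
  rw [gFam_insert_left_of_forall_sgn hG hsgn hip, gFam_insert_right_of_forall_sgn hG hsgn hin,
    gFam_image_erase hip hin, Uterm_succ_left (card_add_card_le_of_disjoint hSp hSn hd)]
  rcases hc with rfl | rfl
  · rw [Uterm_succ_succ_add_neg_one hle, neg_neg, Uterm_succ_succ_add_one]
    ring
  · rw [Uterm_succ_succ_add_one, Uterm_succ_succ_add_neg_one hle]
    ring

end Upoly

/-- **Proposition (deletion–contraction recursion for the U-polynomial).** If `n = 0` then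
`U_D = 1`. For `i ∈ [n]`: if `i` is neither a loop nor a coloop, then
`U_D = U_{D/i} + U_{D∖i} + u ⋅ U_{D({i})}`; if `i` is a loop or a coloop, then
`U_D = (u + v + 1) ⋅ U_{D({i})}`. -/
theorem deltaMatroid_U_recursion (n : ℕ) (D : DeltaMatroid n) :
    (n = 0 → Upoly (univ : Finset (Fin n)) D.feas = 1) ∧
    ∀ i : Fin n,
      (((∃ F ∈ D.feas, i ∈ F) ∧ (∃ F ∈ D.feas, i ∉ F)) →
        Upoly (univ : Finset (Fin n)) D.feas
          = Upoly (univ.erase i) ((D.feas.filter fun F => i ∈ F).image (·.erase i))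
            + Upoly (univ.erase i) (D.feas.filter fun F => i ∉ F)
            + MvPolynomial.X 0 * Upoly (univ.erase i) (D.feas.image (·.erase i))) ∧
      (((∀ F ∈ D.feas, i ∉ F) ∨ (∀ F ∈ D.feas, i ∈ F)) →
        Upoly (univ : Finset (Fin n)) D.feas
          = (MvPolynomial.X 0 + MvPolynomial.X 1 + 1)
            * Upoly (univ.erase i) (D.feas.image (·.erase i))) := by
  refine ⟨fun hn => ?_, fun i => ⟨fun ⟨hnl, hnc⟩ => ?_, fun h => ?_⟩⟩
  · subst hn
    exact Upoly_empty D.feas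
  · exact Upoly_eq_of_exists_mem_of_exists_not_mem (mem_univ i) D.exchange hnl hnc
  · exact Upoly_eq_of_loop_or_coloop (mem_univ i) D.nonempty h
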